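/- arXiv:2309.15235 — 3 statements merged into one kernel-verified Lean document; each statement's English description precedes it below -/
import Mathlib

section
/- For p = 3, the system U(z) = χ, U'(z) = 0 with U(z) = 3z²(z-1+s)/(z³-1) admits the parametrization χ = 3z³/(z³+2) and s = (z³-3z+2)/(z³+2); i.e., if χ and s are defined by these formulas then U(z) = χ and U'(z) = 0. -/
/-- For `p = 3` and `U(z) = 3z²(z-1+s)/(z³-1)`, setting `χ = 3z³/(z³+2)` and
`s = (z³-3z+2)/(z³+2)` gives a parametrization of the double-root locus:
`U(z) = χ` and `U'(z) = 0`. -/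
theorem stmt5 (z : ℂ) (hz1 : z ^ 3 ≠ 1) (hz2 : z ^ 3 ≠ -2)
    (χ s : ℂ)
    (hχ : χ = 3 * z ^ 3 / (z ^ 3 + 2))
    (hs : s = (z ^ 3 - 3 * z + 2) / (z ^ 3 + 2)) :
    3 * z ^ 2 * (z - 1 + s) / (z ^ 3 - 1) = χ ∧
    deriv (fun w : ℂ => 3 * w ^ 2 * (w - 1 + s) / (w ^ 3 - 1)) z = 0 := by
  have hd : z ^ 3 - 1 ≠ 0 := sub_ne_zero.mpr hz1
  have hp : z ^ 3 + 2 ≠ 0 := by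
    intro h; apply hz2; linear_combination h
  constructor
  · rw [hχ, hs]; field_simp; ring
  · have hN : HasDerivAt (fun w : ℂ => 3 * w ^ 2 * (w - 1 + s))
        (6 * z * (z - 1 + s) + 3 * z ^ 2) z := by
      have h1 : HasDerivAt (fun w : ℂ => 3 * w ^ 2) (6 * z) z := by
        have := (hasDerivAt_pow 2 z).const_mul (3:ℂ)
        exact this.congr_deriv (by ring)
      have h2 : HasDerivAt (fun w : ℂ => w - 1 + s) 1 z := by
        simpa using ((hasDerivAt_id z).sub_const 1).add_const s
      exact (h1.mul h2).congr_deriv (by ring)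
    have hD : HasDerivAt (fun w : ℂ => w ^ 3 - 1) (3 * z ^ 2) z := by
      simpa using (hasDerivAt_pow 3 z).sub_const 1
    have := (hN.div hD hd).deriv
    rw [show (fun w : ℂ => 3 * w ^ 2 * (w - 1 + s) / (w ^ 3 - 1)) =
        (fun w : ℂ => 3 * w ^ 2 * (w - 1 + s)) / (fun w : ℂ => w ^ 3 - 1) from rfl, this, hs]
    rw [div_eq_zero_iff]
    left
    field_simp
    ring
end

section
/- Symmetrization limit: for an analytic function g defined in a neighborhood of 1 in ℂ and a positive integer n, the limit as (z_1,…,z_n) → (1,…,1) of Σ_{i=1}^n g(z_i)/Π_{j≠i}(z_i - z_j) equals the (n-1)-st derivative of g at 1 divided by (n-1)!. -/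
open Filter Finset

lemma partial_fractions {n : ℕ} (hn : 1 ≤ n) (z : Fin n → ℂ) (hz : Function.Injective z)
    {w : ℂ} (hw : ∀ j, w ≠ z j) :
    ∑ i : Fin n, (w - z i)⁻¹ * (∏ j ∈ Finset.univ.erase i, (z i - z j))⁻¹
      = (∏ j, (w - z j))⁻¹ := by
  have hP : (∏ j, (w - z j)) ≠ 0 :=
    Finset.prod_ne_zero_iff.2 fun j _ => sub_ne_zero.2 (hw j)
  have hbasis := Lagrange.sum_basis (s := (Finset.univ : Finset (Fin n))) (v := z) hz.injOn
      (Finset.univ_nonempty_iff.2 (Fin.pos_iff_nonempty.1 hn))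
  have hev := congrArg (Polynomial.eval w) hbasis
  rw [Polynomial.eval_finset_sum, Polynomial.eval_one] at hev
  have key : ∀ i : Fin n,
      Polynomial.eval w (Lagrange.basis Finset.univ z i)
        = ((w - z i)⁻¹ * (∏ j ∈ Finset.univ.erase i, (z i - z j))⁻¹) * ∏ j, (w - z j) := by
    intro i
    have hwz : w - z i ≠ 0 := sub_ne_zero.2 (hw i)
    rw [Lagrange.basis, Polynomial.eval_prod]
    have h1 : ∀ j ∈ Finset.univ.erase i,
        Polynomial.eval w (Lagrange.basisDivisor (z i) (z j))
          = (z i - z j)⁻¹ * (w - z j) := by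
      intro j _
      simp [Lagrange.basisDivisor]
    rw [Finset.prod_congr rfl h1, Finset.prod_mul_distrib, ← Finset.prod_inv_distrib,
      ← Finset.mul_prod_erase _ _ (Finset.mem_univ i)]
    rw [mul_mul_mul_comm, inv_mul_cancel₀ hwz, one_mul]
  rw [Finset.sum_congr rfl fun i _ => key i, ← Finset.sum_mul] at hev
  exact eq_inv_of_mul_eq_one_left hev

/-- Symmetrization limit: for `g` analytic in a neighborhood of `1` and `n ≥ 1`,
`Σᵢ g(zᵢ)/Πⱼ≠ᵢ(zᵢ-zⱼ) → g^{(n-1)}(1)/(n-1)!` as `(z₁,…,zₙ) → (1,…,1)`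
through pairwise distinct tuples. -/
theorem stmt9 (n : ℕ) (hn : 1 ≤ n) (g : ℂ → ℂ) (hg : AnalyticAt ℂ g 1) :
    Tendsto
      (fun z : Fin n → ℂ =>
        ∑ i : Fin n, g (z i) / ∏ j ∈ Finset.univ.erase i, (z i - z j))
      (nhdsWithin (fun _ => 1) {z : Fin n → ℂ | Function.Injective z})
      (nhds (iteratedDeriv (n - 1) g 1 / (Nat.factorial (n - 1)))) := by
  classical
  obtain ⟨r, hr0, hrg⟩ : ∃ r : ℝ, 0 < r ∧ DifferentiableOn ℂ g (Metric.closedBall 1 r) := by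
    obtain ⟨r, hr, han⟩ := hg.exists_ball_analyticOnNhd
    refine ⟨r / 2, by positivity, fun x hx => ?_⟩
    exact ((han x (Metric.closedBall_subset_ball (by linarith) hx)).differentiableAt
      ).differentiableWithinAt
  have hgc : Continuous fun θ : ℝ => g (circleMap 1 r θ) :=
    hrg.continuousOn.comp_continuous (continuous_circleMap 1 r)
      (fun θ => circleMap_mem_closedBall 1 hr0.le θ)
  have h2pi : (2 * Real.pi * Complex.I : ℂ) ≠ 0 := Complex.two_pi_I_ne_zero
  set U : Set (Fin n → ℂ) := {z | ∀ i, z i ∈ Metric.ball (1 : ℂ) r} with hUdef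
  have hUopen : IsOpen U := by
    have : U = Set.pi Set.univ (fun _ : Fin n => Metric.ball (1 : ℂ) r) := by
      ext z; simp [hUdef, Set.mem_pi]
    rw [this]
    exact isOpen_set_pi Set.finite_univ (fun i _ => Metric.isOpen_ball)
  have h1U : (fun _ : Fin n => (1 : ℂ)) ∈ U := fun i => Metric.mem_ball_self hr0
  set Φ : (Fin n → ℂ) → ℂ :=
    fun z => (2 * Real.pi * Complex.I : ℂ)⁻¹ •
      ∮ w in C(1, r), (∏ j, (w - z j))⁻¹ • g w with hΦdef
  -- continuity of Φ on U
  have hcont : ContinuousOn Φ U := by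
    rw [continuousOn_iff_continuous_restrict]
    apply Continuous.fun_const_smul
    show Continuous fun u : U => ∮ w in C(1, r), (∏ j, (w - (u : Fin n → ℂ) j))⁻¹ • g w
    simp only [circleIntegral]
    apply intervalIntegral.continuous_parametric_intervalIntegral_of_continuous'
    apply Continuous.fun_smul
    · simp only [deriv_circleMap]
      exact (((continuous_circleMap 0 r).comp continuous_snd).mul continuous_const)
    apply Continuous.fun_smul
    · apply Continuous.inv₀
      · apply continuous_finset_prod
        intro j _
        exact ((continuous_circleMap 1 r).comp continuous_snd).sub
          (((continuous_apply j).comp continuous_subtype_val).comp continuous_fst)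
      · intro p
        exact Finset.prod_ne_zero_iff.2 fun j _ =>
          sub_ne_zero.2 (circleMap_ne_mem_ball (p.1.2 j) p.2)
    · exact hgc.comp continuous_snd
  have hΦtendsto : Tendsto Φ (nhds (fun _ : Fin n => (1 : ℂ)))
      (nhds (Φ fun _ => 1)) := hcont.continuousAt (hUopen.mem_nhds h1U)
  -- value of Φ at the center
  have hval : Φ (fun _ => 1) = iteratedDeriv (n - 1) g 1 / (Nat.factorial (n - 1)) := by
    obtain ⟨R, hR⟩ : ∃ R : NNReal, (R : ℝ) = r := ⟨⟨r, hr0.le⟩, rfl⟩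
    have hps : HasFPowerSeriesOnBall g (cauchyPowerSeries g 1 r) 1 R := by
      rw [← hR] at hrg hr0 ⊢
      exact hrg.hasFPowerSeriesOnBall (by exact_mod_cast hr0)
    have h1 := hps.factorial_smul (1 : ℂ) (n - 1)
    rw [← iteratedDeriv_eq_iteratedFDeriv, cauchyPowerSeries_apply] at h1
    have hΦ1 : Φ (fun _ => 1) = (2 * Real.pi * Complex.I : ℂ)⁻¹ •
        ∮ z in C(1, r), ((1 : ℂ) / (z - 1)) ^ (n - 1) • (z - 1)⁻¹ • g z := by
      simp only [hΦdef]
      congr 1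
      have : (fun w : ℂ => (∏ _j : Fin n, (w - 1))⁻¹ • g w)
          = fun w => ((1 : ℂ) / (w - 1)) ^ (n - 1) • (w - 1)⁻¹ • g w := by
        funext w
        rw [Finset.prod_const, Finset.card_univ, Fintype.card_fin, smul_smul]
        congr 1
        rw [one_div, inv_pow, ← mul_inv, ← pow_succ, Nat.sub_add_cancel hn]
      rw [this]
    have hfac : ((Nat.factorial (n - 1) : ℂ)) ≠ 0 :=
      Nat.cast_ne_zero.2 (Nat.factorial_ne_zero _)
    rw [hΦ1, eq_div_iff hfac, ← h1, nsmul_eq_mul, mul_comm]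
  -- Φ agrees with the divided-difference sum on injective tuples in U
  have hFeq : ∀ z ∈ U, Function.Injective z →
      Φ z = ∑ i : Fin n, g (z i) / ∏ j ∈ Finset.univ.erase i, (z i - z j) := by
    intro z hzU hzinj
    have hq : ∀ i : Fin n, (∏ j ∈ Finset.univ.erase i, (z i - z j)) ≠ 0 := by
      intro i
      exact Finset.prod_ne_zero_iff.2 fun j hj =>
        sub_ne_zero.2 fun h => (Finset.mem_erase.1 hj).1 (hzinj h.symm)
    have hsum_int : (∮ w in C(1, r), (∏ j, (w - z j))⁻¹ • g w)
        = ∑ i : Fin n, (∏ j ∈ Finset.univ.erase i, (z i - z j))⁻¹ •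
            ∮ w in C(1, r), (w - z i)⁻¹ • g w := by
      have step1 : (∮ w in C(1, r), (∏ j, (w - z j))⁻¹ • g w)
          = ∮ w in C(1, r), ∑ i : Fin n,
              (∏ j ∈ Finset.univ.erase i, (z i - z j))⁻¹ • ((w - z i)⁻¹ • g w) := by
        apply circleIntegral.integral_congr hr0.le
        intro w hw
        have hws : ∀ j, w ≠ z j := by
          intro j h
          rw [h] at hw
          exact absurd (Metric.mem_sphere.1 hw) ((Metric.mem_ball.1 (hzU j)).ne)
        have hpf := partial_fractions hn z hzinj hws
        simp only [← hpf, Finset.sum_smul, smul_smul, mul_comm]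
      rw [step1]
      have step2 : (∮ w in C(1, r), ∑ i : Fin n,
            (∏ j ∈ Finset.univ.erase i, (z i - z j))⁻¹ • ((w - z i)⁻¹ • g w))
          = ∑ i : Fin n, ∮ w in C(1, r),
              (∏ j ∈ Finset.univ.erase i, (z i - z j))⁻¹ • ((w - z i)⁻¹ • g w) := by
        simp only [circleIntegral, Finset.smul_sum]
        rw [intervalIntegral.integral_finset_sum]
        intro i _
        apply Continuous.intervalIntegrable
        have hd : Continuous fun θ : ℝ => deriv (circleMap 1 r) θ := by
          simp only [deriv_circleMap]
          exact (continuous_circleMap 0 r).mul continuous_const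
        exact hd.smul (Continuous.fun_const_smul
          ((((continuous_circleMap 1 r).sub continuous_const).inv₀
            (fun θ => sub_ne_zero.2 (circleMap_ne_mem_ball (hzU i) θ))).smul hgc) _)
      rw [step2]
      exact Finset.sum_congr rfl fun i _ => circleIntegral.integral_smul _ _ _ _
    have hcauchy : ∀ i : Fin n, (∮ w in C(1, r), (w - z i)⁻¹ • g w)
        = (2 * Real.pi * Complex.I : ℂ) • g (z i) :=
      fun i => hrg.circleIntegral_sub_inv_smul (hzU i)
    simp only [hΦdef, hsum_int]
    rw [Finset.smul_sum]
    apply Finset.sum_congr rfl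
    intro i _
    rw [hcauchy i, smul_smul, smul_smul, smul_eq_mul, div_eq_mul_inv]
    field_simp [hq i]
  -- assemble
  rw [show iteratedDeriv (n - 1) g 1 / ((Nat.factorial (n - 1) : ℂ)) = Φ (fun _ => 1)
    from hval.symm]
  refine Tendsto.congr' ?_ (hΦtendsto.mono_left nhdsWithin_le_nhds)
  filter_upwards [self_mem_nhdsWithin,
    mem_nhdsWithin_of_mem_nhds (hUopen.mem_nhds h1U)] with z hz hzU
  exact hFeq z hzU hz
end

section
/- The limit moment contour-integral identity: for an analytic function H' near 1, s ∈ (0,1), and j ≥ 0, the sum Σ_{g=0}^{j} (1/(g+1))·C(j,g)·(1/g!)·(d^g/dz^g)[(z-1+s)^j·(H'(z))^{j-g}] evaluated at z=1 equals (1/(2(j+1)πi))·∮_{|z-1|=ε} dz/(z-1+s) · ((z-1+s)·H'(z) + (z-1+s)/(z-1))^{j+1} for small ε > 0. -/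
open Complex Finset Metric

lemma circleIntegral_finset_sum {ι : Type*} (t : Finset ι) (f : ι → ℂ → ℂ) (c : ℂ) (R : ℝ)
    (h : ∀ i ∈ t, CircleIntegrable (f i) c R) :
    (∮ z in C(c, R), ∑ i ∈ t, f i z) = ∑ i ∈ t, ∮ z in C(c, R), f i z := by
  simp only [circleIntegral, smul_sum]
  exact intervalIntegral.integral_finset_sum fun i hi => ((circleIntegrable_iff R).mp (h i hi))

lemma circleIntegral_add' {f g : ℂ → ℂ} {c : ℂ} {R : ℝ} (hf : CircleIntegrable f c R)
    (hg : CircleIntegrable g c R) :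
    (∮ z in C(c, R), (f z + g z)) = (∮ z in C(c, R), f z) + ∮ z in C(c, R), g z := by
  simp only [circleIntegral, smul_add]
  exact intervalIntegral.integral_add hf.out hg.out

/-- Cauchy integral formula for higher derivatives. -/
lemma cauchy_iteratedDeriv {f : ℂ → ℂ} {c : ℂ} {R : ℝ} (hR : 0 < R)
    (hf : DifferentiableOn ℂ f (closedBall c R)) (n : ℕ) :
    (∮ z in C(c, R), (1 / (z - c)) ^ n * ((z - c)⁻¹ * f z))
      = (2 * Real.pi * Complex.I) * (n.factorial : ℂ)⁻¹ * iteratedDeriv n f c := by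
  lift R to NNReal using hR.le
  have h := hf.hasFPowerSeriesOnBall (by exact_mod_cast hR)
  have h2 := h.factorial_smul (1 : ℂ) n
  rw [cauchyPowerSeries_apply, ← iteratedDeriv_eq_iteratedFDeriv] at h2
  simp only [smul_eq_mul, nsmul_eq_mul] at h2
  have hπ : (2 * (Real.pi : ℂ) * Complex.I) ≠ 0 := by
    simp [Real.pi_ne_zero, Complex.I_ne_zero]
  have hn : ((n.factorial : ℂ)) ≠ 0 := by
    exact_mod_cast Nat.cast_ne_zero.mpr n.factorial_ne_zero
  rw [← h2]
  field_simp

/-- Limit moment contour-integral identity: for `H'` analytic near `1`, `s ∈ (0,1)`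
and `j ≥ 0`,
`Σ_{g=0}^{j} (1/(g+1)) C(j,g) (1/g!) d^g/dz^g[(z-1+s)^j (H'(z))^{j-g}]|_{z=1}`
equals
`(1/(2(j+1)πi)) ∮_{|z-1|=ε} ((z-1+s)H'(z) + (z-1+s)/(z-1))^{j+1} dz/(z-1+s)`
for all sufficiently small `ε > 0`. -/
theorem stmt10 (H' : ℂ → ℂ) (hH : AnalyticAt ℂ H' 1) (s : ℝ) (hs : s ∈ Set.Ioo (0 : ℝ) 1)
    (j : ℕ) :
    ∃ ε₀ > 0, ∀ ε ∈ Set.Ioo (0 : ℝ) ε₀,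
      ∑ g ∈ Finset.range (j + 1),
          (1 / ((g : ℂ) + 1)) * (Nat.choose j g : ℂ) * (1 / (Nat.factorial g : ℂ)) *
            iteratedDeriv g (fun z : ℂ => (z - 1 + (s : ℂ)) ^ j * (H' z) ^ (j - g)) 1
        = (1 / (2 * ((j : ℂ) + 1) * Real.pi * Complex.I)) *
            ∮ z in C(1, ε),
              (1 / (z - 1 + (s : ℂ))) *
                ((z - 1 + (s : ℂ)) * H' z + (z - 1 + (s : ℂ)) / (z - 1)) ^ (j + 1) := by
  obtain ⟨r, hr, hana⟩ := hH.exists_ball_analyticOnNhd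
  obtain ⟨hs0, hs1⟩ := hs
  refine ⟨min r s, lt_min hr hs0, fun ε hε => ?_⟩
  obtain ⟨hε0, hεm⟩ := hε
  have hεr : ε < r := (lt_min_iff.mp hεm).1
  have hεs : ε < s := (lt_min_iff.mp hεm).2
  have hsub : closedBall (1 : ℂ) ε ⊆ ball 1 r := closedBall_subset_ball hεr
  have hdH : DifferentiableOn ℂ H' (closedBall 1 ε) :=
    fun z hz => ((hana z (hsub hz)).differentiableAt).differentiableWithinAt
  -- the analytic building blocks
  set G : ℕ → ℂ → ℂ := fun k z => (z - 1 + (s : ℂ)) ^ j * H' z ^ k with hG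
  have hGdiff : ∀ k, DifferentiableOn ℂ (G k) (closedBall 1 ε) := fun k =>
    (((differentiableOn_id.sub_const 1).add_const _).pow j).mul (hdH.pow k)
  -- nonvanishing on the sphere
  have hsphere : ∀ z ∈ sphere (1 : ℂ) ε, z - 1 ≠ 0 ∧ z - 1 + (s : ℂ) ≠ 0 := by
    intro z hz
    rw [mem_sphere_iff_norm] at hz
    constructor
    · intro h; rw [h, norm_zero] at hz; exact absurd hz.symm hε0.ne'
    · intro h
      have : z - 1 = -(s : ℂ) := by linear_combination h
      rw [this] at hz
      simp only [norm_neg, Complex.norm_real, Real.norm_eq_abs, abs_of_pos hs0] at hz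
      exact absurd hz (by linarith)
  -- rewrite the integrand on the sphere
  have hcongr : (∮ z in C(1, ε),
        (1 / (z - 1 + (s : ℂ))) *
          ((z - 1 + (s : ℂ)) * H' z + (z - 1 + (s : ℂ)) / (z - 1)) ^ (j + 1))
      = ∮ z in C(1, ε), (G (j + 1) z +
          ∑ k ∈ Finset.range (j + 1), (Nat.choose (j + 1) k : ℂ) *
            ((1 / (z - 1)) ^ (j - k) * ((z - 1)⁻¹ * G k z))) := by
    refine circleIntegral.integral_congr hε0.le fun z hz => ?_
    obtain ⟨hw, ha⟩ := hsphere z hz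
    have hfac : (z - 1 + (s : ℂ)) * H' z + (z - 1 + (s : ℂ)) / (z - 1)
        = (z - 1 + (s : ℂ)) * (H' z + 1 / (z - 1)) := by
      field_simp
    have main : (1 / (z - 1 + (s : ℂ))) *
          ((z - 1 + (s : ℂ)) * H' z + (z - 1 + (s : ℂ)) / (z - 1)) ^ (j + 1)
        = ∑ k ∈ Finset.range (j + 2), (Nat.choose (j + 1) k : ℂ) *
            ((z - 1 + (s : ℂ)) ^ j * H' z ^ k * (1 / (z - 1)) ^ (j + 1 - k)) := by
      rw [hfac, mul_pow, add_pow (H' z) (1 / (z - 1)) (j + 1), Finset.mul_sum, Finset.mul_sum]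
      refine Finset.sum_congr rfl fun k hk => ?_
      field_simp
      ring
    rw [main, Finset.sum_range_succ, add_comm]
    congr 1
    · simp only [hG, Nat.choose_self, Nat.cast_one, Nat.add_sub_cancel_left, Nat.sub_self,
        pow_zero, mul_one, one_mul]
    · refine Finset.sum_congr rfl fun k hk => ?_
      have hk' : k ≤ j := Nat.lt_succ_iff.mp (Finset.mem_range.mp hk)
      have hjk : j + 1 - k = (j - k) + 1 := by omega
      simp only [hG, hjk, pow_succ]
      field_simp
  rw [hcongr]
  -- integrability of the pieces
  have hGcont : ∀ k, ContinuousOn (G k) (sphere (1 : ℂ) ε) := fun k =>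
    ((hGdiff k).continuousOn).mono sphere_subset_closedBall
  have hint : ∀ k ∈ Finset.range (j + 1), CircleIntegrable
      (fun z => (Nat.choose (j + 1) k : ℂ) * ((1 / (z - 1)) ^ (j - k) * ((z - 1)⁻¹ * G k z)))
      1 ε := by
    intro k _
    refine ContinuousOn.circleIntegrable hε0.le ?_
    refine continuousOn_const.mul (ContinuousOn.mul ?_ (ContinuousOn.mul ?_ (hGcont k)))
    · exact (continuousOn_const.div ((continuousOn_id.sub continuousOn_const))
        fun z hz => (hsphere z hz).1).pow _
    · exact ContinuousOn.inv₀ (continuousOn_id.sub continuousOn_const)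
        fun z hz => (hsphere z hz).1
  have hintsum : CircleIntegrable (fun z => ∑ k ∈ Finset.range (j + 1),
      (Nat.choose (j + 1) k : ℂ) * ((1 / (z - 1)) ^ (j - k) * ((z - 1)⁻¹ * G k z))) 1 ε := by
    apply ContinuousOn.circleIntegrable hε0.le
    refine continuousOn_finset_sum _ fun k hk => ?_
    refine continuousOn_const.mul (ContinuousOn.mul ?_ (ContinuousOn.mul ?_ (hGcont k)))
    · exact (continuousOn_const.div ((continuousOn_id.sub continuousOn_const))
        fun z hz => (hsphere z hz).1).pow _
    · exact ContinuousOn.inv₀ (continuousOn_id.sub continuousOn_const)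
        fun z hz => (hsphere z hz).1
  have hintG : CircleIntegrable (G (j + 1)) 1 ε :=
    ContinuousOn.circleIntegrable hε0.le (hGcont (j + 1))
  rw [circleIntegral_add' hintG hintsum, circleIntegral_finset_sum _ _ _ _ hint]
  -- the analytic term integrates to zero
  have hzero : (∮ z in C(1, ε), G (j + 1) z) = 0 := by
    refine Complex.circleIntegral_eq_zero_of_differentiable_on_off_countable hε0.le
      Set.countable_empty ((hGdiff (j + 1)).continuousOn) fun z hz => ?_
    have hz' : z ∈ ball (1 : ℂ) r := ball_subset_ball hεr.le hz.1
    exact (((differentiableAt_id.sub_const 1).add_const _).pow j).mul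
      (((hana z hz').differentiableAt).pow _)
  rw [hzero, zero_add]
  -- evaluate each singular integral by the Cauchy formula
  have heval : ∀ k ∈ Finset.range (j + 1),
      (∮ z in C(1, ε), (Nat.choose (j + 1) k : ℂ) *
          ((1 / (z - 1)) ^ (j - k) * ((z - 1)⁻¹ * G k z)))
        = (Nat.choose (j + 1) k : ℂ) * ((2 * Real.pi * Complex.I) *
            ((j - k).factorial : ℂ)⁻¹ * iteratedDeriv (j - k) (G k) 1) := by
    intro k _
    rw [circleIntegral.integral_const_mul]
    congr 1
    exact cauchy_iteratedDeriv hε0 (hGdiff k) (j - k)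
  rw [Finset.sum_congr rfl heval]
  -- reindex the sum `k ↦ j - k`
  rw [Finset.mul_sum]
  conv_rhs => rw [← Finset.sum_range_reflect]
  refine Finset.sum_congr rfl fun g hg => ?_
  have hgj : g ≤ j := Nat.lt_succ_iff.mp (Finset.mem_range.mp hg)
  have h1 : j + 1 - 1 - g = j - g := by omega
  have h2 : j - (j - g) = g := by omega
  rw [h1, h2]
  -- the coefficient identity
  have hnat : (j + 1) * Nat.choose j g = Nat.choose (j + 1) (j - g) * (g + 1) := by
    have hsymm : Nat.choose (j + 1) (j - g) = Nat.choose (j + 1) (g + 1) := by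
      have h3 : j - g = (j + 1) - (g + 1) := by omega
      rw [h3, Nat.choose_symm (by omega)]
    rw [hsymm]
    simpa [Nat.succ_eq_add_one] using Nat.add_one_mul_choose_eq j g
  have hπ : (Real.pi : ℂ) ≠ 0 := by exact_mod_cast Real.pi_ne_zero
  have hI : Complex.I ≠ 0 := Complex.I_ne_zero
  have hg1 : ((g : ℂ) + 1) ≠ 0 := Nat.cast_add_one_ne_zero g
  have hj1 : ((j : ℂ) + 1) ≠ 0 := Nat.cast_add_one_ne_zero j
  have hfac : ((g.factorial : ℂ)) ≠ 0 := Nat.cast_ne_zero.mpr g.factorial_ne_zero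
  have hnatC : ((j : ℂ) + 1) * (Nat.choose j g : ℂ)
      = (Nat.choose (j + 1) (j - g) : ℂ) * ((g : ℂ) + 1) := by
    exact_mod_cast congrArg (Nat.cast : ℕ → ℂ) hnat
  have hd1 : (((g : ℂ) + 1) * (g.factorial : ℂ)) ≠ 0 := mul_ne_zero hg1 hfac
  have hd2 : ((((j : ℂ) + 1)) * (g.factorial : ℂ)) ≠ 0 := mul_ne_zero hj1 hfac
  have hX : (2 * ((j : ℂ) + 1) * Real.pi * Complex.I) ≠ 0 :=
    mul_ne_zero (mul_ne_zero (mul_ne_zero two_ne_zero hj1) (by exact_mod_cast hπ)) hI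
  have e1 : (1 / (2 * ((j : ℂ) + 1) * Real.pi * Complex.I)) *
        ((Nat.choose (j + 1) (j - g) : ℂ) * (2 * Real.pi * Complex.I * (g.factorial : ℂ)⁻¹))
      = (Nat.choose (j + 1) (j - g) : ℂ) / (((j : ℂ) + 1) * (g.factorial : ℂ)) := by
    rw [one_div_mul_eq_div, div_eq_div_iff hX hd2]
    linear_combination ((Nat.choose (j + 1) (j - g) : ℂ) * 2 * (Real.pi : ℂ) * Complex.I *
      ((j : ℂ) + 1)) * mul_inv_cancel₀ hfac
  have e2 : (1 / ((g : ℂ) + 1)) * (Nat.choose j g : ℂ) * (1 / (g.factorial : ℂ))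
      = (Nat.choose j g : ℂ) / (((g : ℂ) + 1) * (g.factorial : ℂ)) := by
    rw [one_div_mul_eq_div, div_mul_div_comm, mul_one]
  have hcoef : (1 / ((g : ℂ) + 1)) * (Nat.choose j g : ℂ) * (1 / (g.factorial : ℂ))
      = (1 / (2 * ((j : ℂ) + 1) * Real.pi * Complex.I)) *
          ((Nat.choose (j + 1) (j - g) : ℂ) * (2 * Real.pi * Complex.I * (g.factorial : ℂ)⁻¹)) := by
    rw [e1, e2, div_eq_div_iff hd1 hd2]
    linear_combination (g.factorial : ℂ) * hnatC
  simp only [hG]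
  linear_combination (iteratedDeriv g (fun z : ℂ => (z - 1 + (s : ℂ)) ^ j * (H' z) ^ (j - g)) 1) * hcoef
end
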